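/- Let P = X^4 + a1·X^3 + a2·X^2 + a3·X + a4 over a field k of characteristic zero, and Q = b0·X^3 + b1·X^2 + b2·X + b3 the remainder of (P')^2 mod P. Then disc(Q) = disc(P)·b0^2. -/
import Mathlib

open Polynomial

/-- The monic quartic `X^4 + a1 X^3 + a2 X^2 + a3 X + a4`. -/
noncomputable def quartic {k : Type*} [Field k] (a1 a2 a3 a4 : k) : k[X] :=
  X ^ 4 + C a1 * X ^ 3 + C a2 * X ^ 2 + C a3 * X + C a4

/-- Remainder of the square of the derivative of P under Euclidean division by P. -/
noncomputable def resCubic {k : Type*} [Field k] (a1 a2 a3 a4 : k) : k[X] :=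
  (derivative (quartic a1 a2 a3 a4)) ^ 2 %ₘ quartic a1 a2 a3 a4

/-- Discriminant of the monic quartic `X^4 + p X^3 + q X^2 + r X + s`. -/
def quarticDisc {R : Type*} [CommRing R] (p q r s : R) : R :=
  256*s^3 - 192*p*r*s^2 - 128*q^2*s^2 + 144*p^2*q*s^2 - 27*p^4*s^2
  + 144*q*r^2*s - 6*p^2*r^2*s - 80*p*q^2*r*s + 18*p^3*q*r*s + 16*q^4*s
  - 4*p^2*q^3*s - 27*r^4 + 18*p*q*r^3 - 4*p^3*r^3 - 4*q^3*r^2 + p^2*q^2*r^2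

/-- Discriminant of the cubic `b0 X^3 + b1 X^2 + b2 X + b3`. -/
def cubicDisc {R : Type*} [CommRing R] (b0 b1 b2 b3 : R) : R :=
  b1^2*b2^2 - 4*b0*b2^3 - 4*b1^3*b3 + 18*b0*b1*b2*b3 - 27*b0^2*b3^2

lemma quartic_monic {k : Type*} [Field k] (a1 a2 a3 a4 : k) :
    (quartic a1 a2 a3 a4).Monic := by
  unfold quartic
  monicity!

lemma resCubic_eq {k : Type*} [Field k] (a1 a2 a3 a4 : k) :
    resCubic a1 a2 a3 a4 =
      C (4*a1*a2 - 8*a3 - a1^3) * X^3 + C (4*a2^2 - 2*a1*a3 - 16*a4 - a1^2*a2) * X^2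
      + C (4*a2*a3 - 8*a1*a4 - a1^2*a3) * X + C (a3^2 - a1^2*a4) := by
  set R : k[X] := C (4*a1*a2 - 8*a3 - a1^3) * X^3 + C (4*a2^2 - 2*a1*a3 - 16*a4 - a1^2*a2) * X^2
      + C (4*a2*a3 - 8*a1*a4 - a1^2*a3) * X + C (a3^2 - a1^2*a4) with hR
  have key : (derivative (quartic a1 a2 a3 a4)) ^ 2
      = quartic a1 a2 a3 a4 * (C 16 * X^2 + C (8*a1) * X + C (a1^2)) + R := by
    simp only [quartic, hR, derivative_add, derivative_X_pow, derivative_mul, derivative_C,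
      derivative_X, map_mul, map_add, map_sub, map_pow, C_eq_natCast, Nat.cast_ofNat]
    simp only [map_ofNat C 2, map_ofNat C 3, map_ofNat C 4, map_ofNat C 8, map_ofNat C 16]
    ring
  have hdeg : degree R < degree (quartic a1 a2 a3 a4) := by
    have h1 : degree R ≤ 3 := by rw [hR]; compute_degree
    have h2 : degree (quartic a1 a2 a3 a4) = 4 := by
      unfold quartic; compute_degree!
    rw [h2]
    exact lt_of_le_of_lt h1 (by norm_num)
  rw [resCubic, key, add_modByMonic, self_mul_modByMonic (quartic_monic a1 a2 a3 a4),
    (modByMonic_eq_self_iff (quartic_monic a1 a2 a3 a4)).2 hdeg, zero_add]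

/-- `disc(Q) = disc(P) · b0^2` where `Q = b0 X^3 + b1 X^2 + b2 X + b3` is the resCubic. -/
theorem stmt_5 {k : Type*} [Field k] [CharZero k] (a1 a2 a3 a4 : k) :
    cubicDisc ((resCubic a1 a2 a3 a4).coeff 3) ((resCubic a1 a2 a3 a4).coeff 2)
        ((resCubic a1 a2 a3 a4).coeff 1) ((resCubic a1 a2 a3 a4).coeff 0)
      = quarticDisc a1 a2 a3 a4 * ((resCubic a1 a2 a3 a4).coeff 3) ^ 2 := by
  rw [resCubic_eq]
  simp only [coeff_add, coeff_C_mul, coeff_X_pow, coeff_X, coeff_C, coeff_C_mul, coeff_X_pow]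
  norm_num [cubicDisc, quarticDisc]
  ring
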